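/- Let R = k[[x,y]]/(x^2, xy) where k is a field. Then every indecomposable non-free torsionless (i.e., first-syzygy) R-module is isomorphic to R/(x) or R/(x,y). In particular, the category of first syzygies Ω mod(R) has finite representation type. -/

import Mathlib

/-!
Write `𝔪 = (x, y)` for the maximal ideal of `R = k[[x,y]]/(x², xy)`; then `x𝔪 = 0` and
`R/(x) ≅ k[[y]]` is a PID. If an indecomposable torsionless module `M ⊆ Rⁿ` had an element with a
unit coordinate, `R` would split off `M`; so for non-free `M` all coordinates lie in `𝔪` and
`x` kills `M`. Over the PID `R/(x)` the torsion submodule of the finitely generated module `M`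
is a direct summand, so `M` is either torsion-free, hence free of rank one, i.e. `M ≅ R/(x)`, or
torsion. In the torsion case every `m` is killed by some `σ ∉ (x)`; since `(x)` is prime and
`xy = 0`, the coordinates of `m` are then killed by `y`, so `M` is a vector space over
`R/𝔪 = k` and `M ≅ k`. First syzygies are finitely generated (`R` is Noetherian) and torsionless,
so together with `R` these are all indecomposable syzygies.
-/

universe u

open IsLocalRing

section Prelim

variable (R : Type u) [CommRing R]

/-- `N` is a direct summand of `M`. -/
def IsDirectSummand (N M : ModuleCat.{u} R) : Prop :=
  ∃ (i : N →ₗ[R] M) (p : M →ₗ[R] N), p ∘ₗ i = LinearMap.id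

/-- `N` belongs to `add M`: direct summands of finite direct sums of copies of `M`. -/
def MemAdd (M N : ModuleCat.{u} R) : Prop :=
  ∃ n : ℕ, IsDirectSummand R N (ModuleCat.of R (Fin n → M))

/-- `N` belongs to the additive closure of a class `X` of modules. -/
def MemAddClos (X : ModuleCat.{u} R → Prop) (N : ModuleCat.{u} R) : Prop :=
  ∃ (n : ℕ) (f : Fin n → ModuleCat.{u} R), (∀ i, X (f i)) ∧
    IsDirectSummand R N (ModuleCat.of R (∀ i, f i))

/-- An indecomposable module: nontrivial, with no nontrivial idempotent endomorphism. -/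
def Indec (M : ModuleCat.{u} R) : Prop :=
  Nontrivial M ∧ ∀ e : M →ₗ[R] M, e ∘ₗ e = e → e = 0 ∨ e = LinearMap.id

/-- A class of modules has finite representation type: finitely many indecomposables
up to isomorphism. -/
def FiniteRepType (X : ModuleCat.{u} R → Prop) : Prop :=
  ∃ (n : ℕ) (f : Fin n → ModuleCat.{u} R),
    ∀ N, X N → Indec R N → ∃ i, Nonempty (N ≃ₗ[R] f i)

/-- A class of modules has countable representation type. -/
def CountableRepType (X : ModuleCat.{u} R → Prop) : Prop :=
  ∃ f : ℕ → ModuleCat.{u} R, ∀ N, X N → Indec R N → ∃ i, Nonempty (N ≃ₗ[R] f i)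

/-- `N` is a first syzygy of `M`. -/
def SyzygyOf (N M : ModuleCat.{u} R) : Prop :=
  ∃ P : ModuleCat.{u} R, Module.Finite R P ∧ Module.Projective R P ∧
    ∃ (ι : N →ₗ[R] P) (π : P →ₗ[R] M),
      Function.Injective ι ∧ Function.Surjective π ∧ LinearMap.range ι = LinearMap.ker π

/-- `N` is an `n`-th syzygy of `M`. -/
def IsNthSyzygyOf : ℕ → ModuleCat.{u} R → ModuleCat.{u} R → Prop
  | 0, N, M => Nonempty (N ≃ₗ[R] M)
  | n + 1, N, M => ∃ K : ModuleCat.{u} R, SyzygyOf R K M ∧ IsNthSyzygyOf n N K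

/-- `M` is locally free on the punctured spectrum of a local ring. -/
def LocFreePunctured [IsLocalRing R] (M : ModuleCat.{u} R) : Prop :=
  ∀ p : PrimeSpectrum R, p.asIdeal ≠ maximalIdeal R →
    Module.Free (Localization.AtPrime p.asIdeal) (LocalizedModule p.asIdeal.primeCompl M)

/-- `ExtVanish R N Y i` says that `Ext^i_R(N, Y) = 0`, expressed via (any, equivalently some)
projective resolution of `N`. -/
def ExtVanish (N Y : ModuleCat.{u} R) : ℕ → Prop
  | 0 => Subsingleton (N →ₗ[R] Y)
  | j + 1 =>
    ∃ (F : ℕ → ModuleCat.{u} R) (d : ∀ i : ℕ, F (i + 1) →ₗ[R] F i) (ε : F 0 →ₗ[R] N),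
      (∀ i, Module.Projective R (F i)) ∧ Function.Surjective ε ∧
      LinearMap.range (d 0) = LinearMap.ker ε ∧
      (∀ i, LinearMap.range (d (i + 1)) = LinearMap.ker (d i)) ∧
      ∀ g : F (j + 1) →ₗ[R] Y, g ∘ₗ d (j + 1) = 0 → ∃ f : F j →ₗ[R] Y, g = f ∘ₗ d j

/-- `depth M ≥ n`, via vanishing of `Ext^i(k, M)` for `i < n`. -/
def DepthGE [IsLocalRing R] (n : ℕ) (M : ModuleCat.{u} R) : Prop :=
  ∀ i < n, ExtVanish R (ModuleCat.of R (ResidueField R)) M i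

/-- projective dimension at most `n`. -/
def PdLE : ℕ → ModuleCat.{u} R → Prop
  | 0, M => Module.Projective R M
  | n + 1, M => ∃ N, SyzygyOf R N M ∧ PdLE n N

/-- A commutative Noetherian ring is regular iff every finitely generated module has
finite projective dimension. -/
def IsRegularFPD : Prop :=
  ∀ M : ModuleCat.{u} R, Module.Finite R M → ∃ n, PdLE R n M

/-- the ring has an isolated singularity: localization at every nonmaximal prime is regular. -/
def HasIsolatedSingularity : Prop :=
  ∀ p : PrimeSpectrum R, ¬ p.asIdeal.IsMaximal →
    IsRegularFPD (Localization.AtPrime p.asIdeal)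

/-- Gorenstein projective modules (possibly infinitely generated). -/
def IsGorensteinProjective (M : ModuleCat.{u} R) : Prop :=
  ∃ (P : ℤ → ModuleCat.{u} R) (d : ∀ i : ℤ, P (i + 1) →ₗ[R] P i),
    (∀ i, Module.Projective R (P i)) ∧
    (∀ i, LinearMap.range (d (i + 1)) = LinearMap.ker (d i)) ∧
    (∀ Q : ModuleCat.{u} R, Module.Projective R Q →
      ∀ (i : ℤ) (g : P (i + 1) →ₗ[R] Q), g ∘ₗ d (i + 1) = 0 →
        ∃ f : P i →ₗ[R] Q, g = f ∘ₗ d i) ∧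
    Nonempty (M ≃ₗ[R] LinearMap.range (d 0))

/-- `M` is `n`-torsionfree: `Ext^i(Tr M, R) = 0` for `1 ≤ i ≤ n`, where `Tr M` is the
Auslander transpose computed from a minimal free presentation. -/
def IsNTorsionFree [IsLocalRing R] (n : ℕ) (M : ModuleCat.{u} R) : Prop :=
  ∃ (F₀ F₁ : ModuleCat.{u} R) (π : F₀ →ₗ[R] M) (d : F₁ →ₗ[R] F₀),
    Module.Finite R F₀ ∧ Module.Free R F₀ ∧ Module.Finite R F₁ ∧ Module.Free R F₁ ∧
    Function.Surjective π ∧ LinearMap.ker π = LinearMap.range d ∧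
    LinearMap.ker π ≤ (maximalIdeal R) • (⊤ : Submodule R F₀) ∧
    LinearMap.ker d ≤ (maximalIdeal R) • (⊤ : Submodule R F₁) ∧
    ∀ i, 1 ≤ i → i ≤ n →
      ExtVanish R (ModuleCat.of R ((Module.Dual R F₁) ⧸ LinearMap.range d.dualMap))
        (ModuleCat.of R R) i

/-- extension: `Z` is an extension of a module in `Y` by a module in `X`. -/
def MemExtOp (X Y : ModuleCat.{u} R → Prop) (Z : ModuleCat.{u} R) : Prop :=
  ∃ (A B : ModuleCat.{u} R) (i : A →ₗ[R] Z) (p : Z →ₗ[R] B),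
    X A ∧ Y B ∧ Function.Injective i ∧ Function.Surjective p ∧
      LinearMap.range i = LinearMap.ker p

/-- the ball `[G]_1`. -/
def MemBallOne (G : ModuleCat.{u} R) : ModuleCat.{u} R → Prop :=
  MemAddClos R (fun N => Nonempty (N ≃ₗ[R] ModuleCat.of R R) ∨ ∃ i, IsNthSyzygyOf R i N G)

/-- the ball `[G]_{r+1}` (indexing shifted by one: `MemBall R G r = [G]_{r+1}`). -/
def MemBall (G : ModuleCat.{u} R) : ℕ → ModuleCat.{u} R → Prop
  | 0 => MemBallOne R G
  | r + 1 => MemAddClos R (MemExtOp R (MemBall G r) (MemBallOne R G))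

/-- `|Y|_{s+1}` (indexing shifted by one: `MemPipe R Y s = |Y|_{s+1}`). -/
def MemPipe (Y : ModuleCat.{u} R → Prop) : ℕ → ModuleCat.{u} R → Prop
  | 0 => MemAddClos R Y
  | s + 1 => MemAddClos R (MemExtOp R (MemPipe Y s) Y)

end Prelim

open Ideal

section Indecomposable

variable {R : Type u} [CommRing R]

theorem Indec.nonempty_linearEquiv_of_apply_eq_one {M : ModuleCat.{u} R} (hM : Indec R M)
    (c : M →ₗ[R] R) {m : M} (hc : c m = 1) : Nonempty (M ≃ₗ[R] R) := by
  set s := LinearMap.toSpanSingleton R M m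
  have hcs : c ∘ₗ s = LinearMap.id := LinearMap.ext fun r => by simp [s, hc]
  have hsc : s ∘ₗ c = LinearMap.id := by
    refine (hM.2 _ ?_).resolve_left fun h => ?_
    · rw [LinearMap.comp_assoc, ← LinearMap.comp_assoc c s c, hcs, LinearMap.id_comp]
    · have h01 : (0 : R) = 1 := by
        simpa [s, hc, eq_comm] using congrArg c (LinearMap.congr_fun h m)
      obtain ⟨a, b, hab⟩ := hM.1.exists_pair_ne
      exact hab (by rw [← one_smul R a, ← one_smul R b, ← h01, zero_smul, zero_smul])
  exact ⟨LinearEquiv.ofLinearMap c s hcs hsc⟩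

theorem Indec.nonempty_linearEquiv_of_free {M : ModuleCat.{u} R} [Module.Free R M]
    (hM : Indec R M) : Nonempty (M ≃ₗ[R] R) := by
  have := hM.1
  let b := Module.Free.chooseBasis R M
  obtain ⟨i⟩ := b.index_nonempty
  exact hM.nonempty_linearEquiv_of_apply_eq_one (b.coord i) (m := b i) (by simp)

theorem Indec.of_isScalarTower (S : Type u) [CommRing S] [Algebra R S] {M : ModuleCat.{u} R}
    [Module S M] [IsScalarTower R S M] (hM : Indec R M) : Indec S (ModuleCat.of S M) := by
  refine ⟨hM.1, fun e he => (hM.2 (e.restrictScalars R) ?_).imp ?_ ?_⟩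
  · ext m; exact LinearMap.congr_fun he m
  · intro h; ext m; exact LinearMap.congr_fun h m
  · intro h; ext m; exact LinearMap.congr_fun h m

theorem Indec.torsion_eq_bot_or_eq_top [IsDomain R] [IsPrincipalIdealRing R]
    {M : ModuleCat.{u} R} [Module.Finite R M] (hM : Indec R M) :
    Submodule.torsion R M = ⊥ ∨ Submodule.torsion R M = ⊤ := by
  set T := Submodule.torsion R M
  -- `M ⧸ T` is free, so the quotient map splits
  obtain ⟨s, hs⟩ := Module.projective_lifting_property T.mkQ LinearMap.id T.mkQ_surjective
  have hs' : ∀ z, T.mkQ (s z) = z := LinearMap.congr_fun hs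
  have hidem : (s ∘ₗ T.mkQ) ∘ₗ (s ∘ₗ T.mkQ) = s ∘ₗ T.mkQ := by
    rw [LinearMap.comp_assoc, ← LinearMap.comp_assoc T.mkQ s T.mkQ, hs, LinearMap.id_comp]
  rcases hM.2 _ hidem with h | h
  · refine Or.inr (eq_top_iff.mpr fun m _ => ?_)
    rw [← Submodule.Quotient.mk_eq_zero, ← Submodule.mkQ_apply, ← hs' (T.mkQ m)]
    simpa using congrArg T.mkQ (LinearMap.congr_fun h m)
  · refine Or.inl (eq_bot_iff.mpr fun m hm => ?_)
    have hm' : s (T.mkQ m) = m := LinearMap.congr_fun h m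
    rw [Submodule.mkQ_apply, (Submodule.Quotient.mk_eq_zero T).mpr hm, map_zero] at hm'
    exact hm'.symm

end Indecomposable

theorem exists_injective_pi_of_injective {R N P : Type*} [CommRing R] [AddCommGroup N]
    [Module R N] [AddCommGroup P] [Module R P] [Module.Finite R P] [Module.Projective R P]
    {ι : N →ₗ[R] P} (hι : Function.Injective ι) :
    ∃ (n : ℕ) (f : N →ₗ[R] Fin n → R), Function.Injective f := by
  obtain ⟨n, g, hg⟩ := Module.Finite.exists_fin' R P
  obtain ⟨s, hs⟩ := Module.projective_lifting_property g LinearMap.id hg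
  have hgs : Function.LeftInverse g s := LinearMap.congr_fun hs
  exact ⟨n, s ∘ₗ ι, hgs.injective.comp hι⟩

section Classification

variable {R : Type u} [CommRing R]

theorem smul_eq_zero_of_indec_of_not_free [IsLocalRing R] {x : R}
    (hxm : ∀ r ∈ maximalIdeal R, x * r = 0) {M : ModuleCat.{u} R} (hM : Indec R M)
    {n : ℕ} {f : M →ₗ[R] Fin n → R} (hf : Function.Injective f)
    (hfree : ¬ Module.Free R M) (m : M) : x • m = 0 := by
  refine hf ?_
  rw [map_smul, map_zero]
  funext i
  refine hxm _ ((IsLocalRing.mem_maximalIdeal _).mpr fun hu => hfree ?_)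
  -- a unit coordinate splits off a copy of `R`
  obtain ⟨e⟩ := hM.nonempty_linearEquiv_of_apply_eq_one (LinearMap.proj i ∘ₗ f)
    (m := (hu.unit⁻¹ : Rˣ) • m) (by simp [Units.smul_def])
  exact Module.Free.of_equiv e.symm

theorem smul_eq_zero_of_mem_torsion {x y : R} (hxy : x * y = 0) [IsDomain (R ⧸ span {x})]
    {M : ModuleCat.{u} R} [Module (R ⧸ span {x}) M] [IsScalarTower R (R ⧸ span {x}) M]
    {n : ℕ} {f : M →ₗ[R] Fin n → R} (hf : Function.Injective f) {m : M}
    (hm : m ∈ Submodule.torsion (R ⧸ span {x}) M) : y • m = 0 := by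
  obtain ⟨⟨a, ha⟩, ham⟩ := (Submodule.mem_torsion_iff m).mp hm
  obtain ⟨σ, rfl⟩ := Ideal.Quotient.mk_surjective a
  have hσ : σ ∉ span {x} := fun h =>
    nonZeroDivisors.ne_zero ha (Ideal.Quotient.eq_zero_iff_mem.mpr h)
  have hσm : σ • m = 0 := by rwa [← algebraMap_smul (R ⧸ span {x}) σ m]
  have hprime : (span {x}).IsPrime := (Ideal.Quotient.isDomain_iff_prime _).mp inferInstance
  refine hf ?_
  rw [map_smul, map_zero]
  funext i
  have hr : f m i ∈ span {x} := by
    have h0 : σ * f m i = 0 := by simpa using congrFun (congrArg f hσm) i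
    exact (hprime.mem_or_mem (h0 ▸ zero_mem _)).resolve_left hσ
  obtain ⟨c, hc⟩ := Ideal.mem_span_singleton'.mp hr
  simp [← hc, mul_left_comm y c x, mul_comm x y ▸ hxy]

theorem Indec.nonempty_linearEquiv_quotient_of_injective [IsLocalRing R] {x y : R}
    (hm : maximalIdeal R = span {x, y}) (hxm : ∀ r ∈ maximalIdeal R, x * r = 0)
    [IsDomain (R ⧸ span {x})] [IsPrincipalIdealRing (R ⧸ span {x})]
    {M : ModuleCat.{u} R} [Module.Finite R M] (hM : Indec R M)
    {n : ℕ} {f : M →ₗ[R] Fin n → R} (hf : Function.Injective f)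
    (hfree : ¬ Module.Free R M) :
    Nonempty (M ≃ₗ[R] R ⧸ span {x}) ∨ Nonempty (M ≃ₗ[R] R ⧸ span {x, y}) := by
  have hx : ∀ m : M, x • m = 0 := smul_eq_zero_of_indec_of_not_free hxm hM hf hfree
  have hxM : Module.IsTorsionBySet R M (span {x} : Set R) :=
    (Module.isTorsionBySet_span_singleton_iff x).mpr hx
  let := hxM.module
  have : Module.Finite (R ⧸ span {x}) M := Module.Finite.of_restrictScalars_finite R _ _
  rcases (hM.of_isScalarTower (R ⧸ span {x})).torsion_eq_bot_or_eq_top with htors | htors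
  · have : Module.IsTorsionFree (R ⧸ span {x}) M :=
      Submodule.isTorsionFree_iff_torsion_eq_bot.mpr htors
    have : Module.Free (R ⧸ span {x}) M := Module.free_of_finite_type_torsion_free'
    obtain ⟨e⟩ := (hM.of_isScalarTower (R ⧸ span {x})).nonempty_linearEquiv_of_free
    exact Or.inl ⟨e.restrictScalars R⟩
  · have hxyM : Module.IsTorsionBySet R M (span {x, y} : Set R) := by
      refine (Module.isTorsionBySet_iff_is_torsion_by_span _).mp ?_
      rintro m ⟨r, hr⟩
      change r • m = 0
      rcases hr with hr | hr <;> rw [Set.mem_singleton_iff.mp hr]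
      · exact hx m
      · exact smul_eq_zero_of_mem_torsion (hxm y (hm ▸ subset_span (by simp))) hf
          (htors ▸ Submodule.mem_top)
    let := hxyM.module
    have : (span {x, y}).IsMaximal := hm ▸ maximalIdeal.isMaximal R
    let : Field (R ⧸ span {x, y}) := Ideal.Quotient.field _
    obtain ⟨e⟩ := (hM.of_isScalarTower (R ⧸ span {x, y})).nonempty_linearEquiv_of_free
    exact Or.inr ⟨e.restrictScalars R⟩

theorem finiteRepType_syzygy {R : Type u} [CommRing R] [IsLocalRing R] [IsNoetherianRing R]
    {x y : R} (hm : maximalIdeal R = span {x, y}) (hxm : ∀ r ∈ maximalIdeal R, x * r = 0)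
    [IsDomain (R ⧸ span {x})] [IsPrincipalIdealRing (R ⧸ span {x})] :
    FiniteRepType R (fun N => ∃ M : ModuleCat.{u} R, Module.Finite R M ∧ SyzygyOf R N M) := by
  refine ⟨3, ![.of R R, .of R (R ⧸ span {x}), .of R (R ⧸ span {x, y})], ?_⟩
  rintro N ⟨-, -, P, _, _, ι, -, hι, -, -⟩ hN
  have : Module.Finite R N := Module.Finite.of_injective ι hι
  obtain ⟨n, f, hf⟩ := exists_injective_pi_of_injective hι
  by_cases hfree : Module.Free R N
  · exact ⟨0, hN.nonempty_linearEquiv_of_free⟩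
  · rcases hN.nonempty_linearEquiv_quotient_of_injective hm hxm hf hfree with h | h
    exacts [⟨1, h⟩, ⟨2, h⟩]

end Classification

theorem IsLocalRing.maximalIdeal_eq_span_pair_of_surjective {R T : Type*} [CommRing R]
    [CommRing T] [IsLocalRing R] [IsLocalRing T] {φ : R →+* T} (hφ : Function.Surjective φ)
    {x y : R} (hker : RingHom.ker φ = span {x}) (hT : maximalIdeal T = span {φ y}) :
    maximalIdeal R = span {x, y} := by
  have := IsLocalHom.of_surjective φ hφ
  rw [← IsLocalRing.maximalIdeal_comap φ, hT, ← Set.image_singleton, ← Ideal.map_span,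
    Ideal.comap_map_of_surjective φ hφ, ← RingHom.ker_eq_comap_bot, hker,
    Ideal.span_insert x, sup_comm]

namespace LineWithEmbeddedPoint

open MvPowerSeries

variable (k : Type*) [Field k]

noncomputable abbrev I : Ideal (MvPowerSeries (Fin 2) k) := span {X 0 ^ 2, X 0 * X 1}

abbrev R := MvPowerSeries (Fin 2) k ⧸ I k

noncomputable abbrev x : R k := Ideal.Quotient.mk (I k) (X 0)

noncomputable abbrev y : R k := Ideal.Quotient.mk (I k) (X 1)

noncomputable abbrev killX₀ : MvPowerSeries (Fin 2) k →+* PowerSeries k :=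
  (killCompl (Function.Embedding.punit 1)).toRingHom

theorem coeff_killX₀ (f : MvPowerSeries (Fin 2) k) (d : Unit →₀ ℕ) :
    coeff d (killX₀ k f) = coeff (d.embDomain (Function.Embedding.punit 1)) f :=
  coeff_killCompl f d

theorem killX₀_X₁ : killX₀ k (X 1) = PowerSeries.X :=
  killCompl_X ()

theorem ker_killX₀ : RingHom.ker (killX₀ k) = span {X 0} := by
  ext f
  rw [RingHom.mem_ker, Ideal.mem_span_singleton, X_dvd_iff]
  constructor
  · intro hf m hm
    obtain ⟨d, rfl⟩ : m ∈ Set.range (Finsupp.embDomain (Function.Embedding.punit 1)) := by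
      rw [Finsupp.mem_range_embDomain_iff]
      intro i hi
      fin_cases i
      · exact absurd hm (by simpa using hi)
      · exact ⟨(), rfl⟩
    rw [← coeff_killX₀, hf, map_zero]
  · intro hf
    refine MvPowerSeries.ext fun d => ?_
    rw [coeff_killX₀, hf _ (by simp [Finsupp.embDomain_apply, Function.Embedding.punit]),
      map_zero]

theorem I_le_ker_killX₀ : I k ≤ RingHom.ker (killX₀ k) := by
  rw [ker_killX₀, span_le]
  rintro g (rfl | rfl) <;> rw [SetLike.mem_coe, mem_span_singleton]
  exacts [dvd_pow_self _ two_ne_zero, dvd_mul_right _ _]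

noncomputable def toPowerSeries : R k →+* PowerSeries k :=
  Ideal.Quotient.lift (I k) (killX₀ k) (I_le_ker_killX₀ k)

theorem toPowerSeries_surjective : Function.Surjective (toPowerSeries k) :=
  Ideal.Quotient.lift_surjective_of_surjective _ _
    fun p => ⟨rename (Function.Embedding.punit 1) p, killCompl_rename_app p⟩

theorem ker_toPowerSeries : RingHom.ker (toPowerSeries k) = span {x k} := by
  rw [toPowerSeries, Ideal.ker_quotient_lift, ker_killX₀, Ideal.map_span, Set.image_singleton]

theorem toPowerSeries_y : toPowerSeries k (y k) = PowerSeries.X :=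
  killX₀_X₁ k

noncomputable def quotientSpanXEquiv : R k ⧸ span {x k} ≃+* PowerSeries k :=
  (Ideal.quotEquivOfEq (ker_toPowerSeries k).symm).trans
    (RingHom.quotientKerEquivOfSurjective (toPowerSeries_surjective k))

instance : (span {x k}).IsPrime := ker_toPowerSeries k ▸ RingHom.ker_isPrime _

instance : IsPrincipalIdealRing (R k ⧸ span {x k}) :=
  IsPrincipalIdealRing.of_surjective _ (quotientSpanXEquiv k).symm.surjective

instance : Nontrivial (R k) := (toPowerSeries_surjective k).nontrivial

instance : IsLocalRing (R k) :=
  IsLocalRing.of_surjective' (Ideal.Quotient.mk (I k)) Ideal.Quotient.mk_surjective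

theorem maximalIdeal_eq : maximalIdeal (R k) = span {x k, y k} :=
  IsLocalRing.maximalIdeal_eq_span_pair_of_surjective (toPowerSeries_surjective k)
    (ker_toPowerSeries k) (by rw [toPowerSeries_y, PowerSeries.maximalIdeal_eq_span_X])

theorem x_mul_eq_zero_of_mem_maximalIdeal (r : R k) (hr : r ∈ maximalIdeal (R k)) :
    x k * r = 0 := by
  obtain ⟨a, b, rfl⟩ := Ideal.mem_span_pair.mp (maximalIdeal_eq k ▸ hr)
  have hxx : x k * x k = 0 := by
    rw [← map_mul, Ideal.Quotient.eq_zero_iff_mem, ← pow_two]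
    exact subset_span (by simp)
  have hxy : x k * y k = 0 := by
    rw [← map_mul, Ideal.Quotient.eq_zero_iff_mem]
    exact subset_span (by simp)
  linear_combination a * hxx + b * hxy

end LineWithEmbeddedPoint

/-- for `R = k[[x,y]]/(x², xy)`, every indecomposable non-free torsionless
(finitely generated) `R`-module is isomorphic to `R/(x)` or `R/(x,y)`; in particular the
category of first syzygies has finite representation type. -/
theorem stmt17 (k : Type) [Field k] :
    ∀ (I : Ideal (MvPowerSeries (Fin 2) k)),
      I = Ideal.span {(MvPowerSeries.X 0 : MvPowerSeries (Fin 2) k) ^ 2,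
        MvPowerSeries.X 0 * MvPowerSeries.X 1} →
    ∀ (x y : MvPowerSeries (Fin 2) k ⧸ I),
      x = Ideal.Quotient.mk I (MvPowerSeries.X 0) →
      y = Ideal.Quotient.mk I (MvPowerSeries.X 1) →
    (∀ M : ModuleCat.{0} (MvPowerSeries (Fin 2) k ⧸ I),
      Module.Finite (MvPowerSeries (Fin 2) k ⧸ I) M →
      Indec (MvPowerSeries (Fin 2) k ⧸ I) M →
      (∃ (n : ℕ) (f : M →ₗ[MvPowerSeries (Fin 2) k ⧸ I]
          (Fin n → MvPowerSeries (Fin 2) k ⧸ I)), Function.Injective f) →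
      ¬ Module.Free (MvPowerSeries (Fin 2) k ⧸ I) M →
      (Nonempty (M ≃ₗ[MvPowerSeries (Fin 2) k ⧸ I]
          ((MvPowerSeries (Fin 2) k ⧸ I) ⧸ Ideal.span {x})) ∨
       Nonempty (M ≃ₗ[MvPowerSeries (Fin 2) k ⧸ I]
          ((MvPowerSeries (Fin 2) k ⧸ I) ⧸ Ideal.span {x, y})))) ∧
    FiniteRepType (MvPowerSeries (Fin 2) k ⧸ I)
      (fun N => ∃ M : ModuleCat.{0} (MvPowerSeries (Fin 2) k ⧸ I),
        Module.Finite (MvPowerSeries (Fin 2) k ⧸ I) M ∧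
          SyzygyOf (MvPowerSeries (Fin 2) k ⧸ I) N M) := by
  intro I hI x y hx hy
  subst hI hx hy
  have hm := LineWithEmbeddedPoint.maximalIdeal_eq k
  have hxm := LineWithEmbeddedPoint.x_mul_eq_zero_of_mem_maximalIdeal k
  exact ⟨fun M _ hM ⟨_, _, hf⟩ hfree =>
    hM.nonempty_linearEquiv_quotient_of_injective hm hxm hf hfree, finiteRepType_syzygy hm hxm⟩
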